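/- arXiv:2002.02565 — 7 statements merged into one kernel-verified Lean document; each statement's English description precedes it below -/
import Mathlib

section
/- For any group G, the set LO(G) of positive cones of G, viewed as a subset of the product space 2^G (with the product topology where 2 is discrete), is a closed subset of 2^G. In particular LO(G) is compact. -/
/-! Each positive-cone axiom constrains only finitely many coordinates of `χ : G → Bool`, so it
cuts out a clopen subset of `2^G`; `LOset G` is an intersection of such sets, hence closed, and
compact because `2^G` is compact (Tychonoff). -/

/-- The set of (characteristic functions of) positive cones of `G`,
viewed inside the product space `2^G = G → Bool`. -/
def LOset (G : Type*) [Group G] : Set (G → Bool) :=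
  {χ | (∀ a b : G, χ a = true → χ b = true → χ (a * b) = true) ∧
       (∀ g : G, χ g = true ∨ χ g⁻¹ = true ∨ g = 1) ∧
       (∀ g : G, χ g = true → χ g⁻¹ ≠ true) ∧
       χ (1 : G) ≠ true}

lemma isClopen_setOf_comp {ι κ X : Type*} [TopologicalSpace X] [DiscreteTopology X] [Finite κ]
    (v : κ → ι) (p : (κ → X) → Prop) : IsClopen {χ : ι → X | p (χ ∘ v)} :=
  (isClopen_discrete {y | p y}).preimage (continuous_pi fun k => continuous_apply (v k))

theorem isClosed_LOset (G : Type*) [Group G] : IsClosed (LOset G) := by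
  simp only [LOset, Set.ofPred_and, Set.ofPred_forall]
  refine (isClosed_iInter fun a => isClosed_iInter fun b => ?_).inter
    ((isClosed_iInter fun g => ?_).inter ((isClosed_iInter fun g => ?_).inter ?_))
  · exact (isClopen_setOf_comp ![a, b, a * b]
      fun x => x 0 = true → x 1 = true → x 2 = true).isClosed
  · exact (isClopen_setOf_comp ![g, g⁻¹] fun x => x 0 = true ∨ x 1 = true ∨ g = 1).isClosed
  · exact (isClopen_setOf_comp ![g, g⁻¹] fun x => x 0 = true → x 1 ≠ true).isClosed
  · exact (isClopen_setOf_comp ![(1 : G)] fun x => x 0 ≠ true).isClosed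

theorem stmt_3 (G : Type*) [Group G] :
    IsClosed (LOset G) ∧ IsCompact (LOset G) :=
  ⟨isClosed_LOset G, (isClosed_LOset G).isCompact⟩
end

section
/- Let G be a group, P a positive cone of G, and suppose the orbit of P under the conjugation action of G on LO(G) is finite. Then the left-ordering associated to P is Conradian: for every pair g, h ∈ P there exists n ∈ ℕ such that g⁻¹hgⁿ ∈ P (i.e., g < hgⁿ in the order given by P). -/
/-- A positive cone on a group `G`. -/
def IsCone {G : Type*} [Group G] (P : Set G) : Prop :=
  (∀ a ∈ P, ∀ b ∈ P, a * b ∈ P) ∧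
  (∀ g : G, g ∈ P ∨ g⁻¹ ∈ P ∨ g = 1) ∧
  (∀ g ∈ P, g⁻¹ ∉ P) ∧
  (1 : G) ∉ P

/-!
If the conjugation orbit of `P` is finite, the conjugates `gⁿ • P` cannot all be distinct, so some
power `gᵏ` with `k > 0` normalises `P`. For `g, h ∈ P` this gives `g⁻ᵏ h gᵏ ∈ P`, and then
`g⁻¹ h gᵏ = gᵏ⁻¹ (g⁻ᵏ h gᵏ)` is a product of positive elements.
-/

open Pointwise

theorem MulAction.exists_pow_smul_eq_of_finite_orbit {M α : Type*} [Group M] [MulAction M α]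
    {x : α} (hx : (orbit M x).Finite) (g : M) : ∃ k : ℕ, 0 < k ∧ g ^ k • x = x := by
  obtain ⟨m, n, hmn, heq⟩ :=
    hx.exists_lt_map_eq_of_forall_mem (f := fun n : ℕ => g ^ n • x) fun n => mem_orbit x _
  refine ⟨n - m, Nat.sub_pos_of_lt hmn, smul_left_cancel (g ^ m) ?_⟩
  rw [smul_smul, pow_mul_pow_sub g hmn.le]
  exact heq.symm

theorem ConjAct.orbit_set_eq_conj_images {G : Type*} [Group G] (P : Set G) :
    MulAction.orbit (ConjAct G) P = {Q | ∃ g : G, Q = (fun p => g * p * g⁻¹) '' P} := by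
  ext Q
  simp only [MulAction.mem_orbit_iff, ← Set.image_smul, ConjAct.smul_def, Set.mem_ofPred_eq,
    ConjAct.toConjAct.surjective.exists, ConjAct.ofConjAct_toConjAct, eq_comm]

theorem pow_mul_mem_of_mul_mem {G : Type*} [Monoid G] {P : Set G}
    (hmul : ∀ a ∈ P, ∀ b ∈ P, a * b ∈ P) {g s : G} (hg : g ∈ P) (hs : s ∈ P) :
    ∀ n : ℕ, g ^ n * s ∈ P
  | 0 => by rwa [pow_zero, one_mul]
  | n + 1 => by
    rw [pow_succ', mul_assoc]
    exact hmul g hg _ (pow_mul_mem_of_mul_mem hmul hg hs n)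

theorem inv_mul_mul_pow_mem_of_conj_pow_mem {G : Type*} [Group G] {P : Set G}
    (hmul : ∀ a ∈ P, ∀ b ∈ P, a * b ∈ P) {g h : G} (hg : g ∈ P) {k : ℕ} (hk : 0 < k)
    (hconj : (g ^ k)⁻¹ * h * g ^ k ∈ P) : g⁻¹ * (h * g ^ k) ∈ P := by
  obtain ⟨j, rfl⟩ := Nat.exists_eq_add_one_of_ne_zero hk.ne'
  have : g⁻¹ * (h * g ^ (j + 1)) = g ^ j * ((g ^ (j + 1))⁻¹ * h * g ^ (j + 1)) := by group
  rw [this]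
  exact pow_mul_mem_of_mul_mem hmul hg hconj j

/-- If the orbit of `P` under the conjugation action of `G` on `LO(G)` is
finite, then the associated left-ordering is Conradian. -/
theorem stmt_6 {G : Type*} [Group G] (P : Set G) (hP : IsCone P)
    (hfin : {Q : Set G | ∃ g : G, Q = (fun p => g * p * g⁻¹) '' P}.Finite) :
    ∀ g ∈ P, ∀ h ∈ P, ∃ n : ℕ, g⁻¹ * (h * g ^ n) ∈ P := by
  intro g hg h hh
  obtain ⟨k, hk, hfix⟩ := MulAction.exists_pow_smul_eq_of_finite_orbit
    (ConjAct.orbit_set_eq_conj_images P ▸ hfin) (ConjAct.toConjAct g⁻¹)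
  refine ⟨k, inv_mul_mul_pow_mem_of_conj_pow_mem hP.1 hg hk ?_⟩
  have := Set.smul_mem_smul_set (a := ConjAct.toConjAct g⁻¹ ^ k) hh
  rwa [hfix, ← map_pow, ConjAct.toConjAct_smul, inv_pow, inv_inv] at this
end

section
/- Let G be a countable group acting by homeomorphisms on a compact Polish space X such that every orbit is dense and some orbit is nonmeager. Then X consists of a single finite orbit. -/
/-!
A countable nonmeagre set in a T₁ space must contain an isolated point `y`, since otherwise it
is a countable union of nowhere dense singletons. Every dense orbit meets the open set `{y}`, so
`X` is the orbit of `y`; translating `{y}` by homeomorphisms makes every point isolated, and a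
compact discrete space is finite.
-/

open Set MulAction

lemma isOpen_singleton_of_not_isMeagre {X : Type*} [TopologicalSpace X] [T1Space X] {y : X}
    (hy : ¬IsMeagre ({y} : Set X)) : IsOpen ({y} : Set X) := by
  have hint : (interior {y}).Nonempty := by
    by_contra h
    exact hy ((isClosed_singleton.isNowhereDense_iff.2 (not_nonempty_iff_eq_empty.1 h)).isMeagre)
  obtain ⟨z, hz⟩ := hint
  obtain rfl : z = y := mem_singleton_iff.1 (interior_subset hz)
  exact subset_interior_iff_isOpen.1 (singleton_subset_iff.2 hz)

lemma Set.Countable.exists_isOpen_singleton_of_not_isMeagre {X : Type*} [TopologicalSpace X]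
    [T1Space X] {s : Set X} (hs : s.Countable) (h : ¬IsMeagre s) :
    ∃ y ∈ s, IsOpen ({y} : Set X) := by
  rw [← biUnion_of_singleton s] at h
  obtain ⟨y, hys, hy⟩ := exists_of_not_isMeagre_biUnion hs h
  exact ⟨y, hys, isOpen_singleton_of_not_isMeagre hy⟩

lemma MulAction.orbit_eq_univ_of_isOpen_singleton {G X : Type*} [Group G] [MulAction G X]
    [TopologicalSpace X] (hdense : ∀ x : X, Dense (orbit G x)) {y : X}
    (hy : IsOpen ({y} : Set X)) : orbit G y = univ := by
  refine eq_univ_of_forall fun z => ?_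
  obtain ⟨_, rfl, hyz⟩ := (hdense z).inter_open_nonempty _ hy (singleton_nonempty y)
  exact mem_orbit_symm.1 hyz

lemma discreteTopology_of_orbit_eq_univ {G X : Type*} [Group G] [MulAction G X]
    [TopologicalSpace X] [ContinuousConstSMul G X] {y : X} (horb : orbit G y = univ)
    (hy : IsOpen ({y} : Set X)) : DiscreteTopology X := by
  refine discreteTopology_iff_isOpen_singleton.2 fun z => ?_
  obtain ⟨g, rfl⟩ : z ∈ orbit G y := horb ▸ mem_univ z
  simpa only [smul_set_singleton] using hy.smul g

/-- If a countable group acts by homeomorphisms on a compact Polish space with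
every orbit dense and some orbit nonmeager, then the space is a single finite
orbit. -/
theorem stmt_9 {G X : Type*} [Group G] [Countable G]
    [TopologicalSpace X] [CompactSpace X] [PolishSpace X]
    [MulAction G X] (hcont : ∀ g : G, Continuous (fun x : X => g • x))
    (hdense : ∀ x : X, Dense (MulAction.orbit G x))
    (hnonmeager : ∃ x : X, ¬ IsMeagre (MulAction.orbit G x)) :
    ∃ x : X, MulAction.orbit G x = Set.univ ∧ (MulAction.orbit G x).Finite := by
  have : ContinuousConstSMul G X := ⟨hcont⟩
  obtain ⟨x, hx⟩ := hnonmeager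
  obtain ⟨y, -, hy⟩ :=
    (countable_range fun g : G => g • x).exists_isOpen_singleton_of_not_isMeagre hx
  have horb := orbit_eq_univ_of_isOpen_singleton hdense hy
  have := discreteTopology_of_orbit_eq_univ horb hy
  have : Finite X := finite_of_compact_of_discrete
  exact ⟨y, horb, toFinite _⟩
end

section
/- Let C be a subgroup of a group G, let R be a positive cone of G, and suppose R = P ∪ Q where P = R ∩ C is a positive cone of C and Q = R \ C. Then Q satisfies: Q·Q ⊆ Q, C·Q·C ⊆ Q, and G = Q ∪ Q⁻¹ ∪ C, provided C is convex relative to the left-order determined by R. -/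
/-- A positive cone of a subgroup `C` of `G`, as a subset of `G`. -/
def IsConeOn {G : Type*} [Group G] (C : Subgroup G) (P : Set G) : Prop :=
  P ⊆ (C : Set G) ∧
  (∀ a ∈ P, ∀ b ∈ P, a * b ∈ P) ∧
  (∀ g ∈ C, g ∈ P ∨ g⁻¹ ∈ P ∨ g = 1) ∧
  (∀ g ∈ P, g⁻¹ ∉ P) ∧
  (1 : G) ∉ P

namespace IsCone

variable {G : Type*} [Group G] {R : Set G}

theorem mem_diff_or_inv_mem_diff_or_mem (hR : IsCone R) (C : Subgroup G) (g : G) :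
    g ∈ R \ (C : Set G) ∨ g⁻¹ ∈ R \ (C : Set G) ∨ g ∈ C := by
  by_cases hg : g ∈ C
  · exact .inr (.inr hg)
  rcases hR.2.1 g with hpos | hneg | hone
  · exact .inl ⟨hpos, hg⟩
  · exact .inr (.inl ⟨hneg, fun h => hg (C.inv_mem_iff.1 h)⟩)
  · exact absurd (hone ▸ C.one_mem) hg

end IsCone

-- `g⁻¹ * f ∈ R` encodes `g <_R f`.
def Subgroup.IsConvexWRT {G : Type*} [Group G] (C : Subgroup G) (R : Set G) : Prop :=
  ∀ g ∈ C, ∀ h ∈ C, ∀ f : G, g⁻¹ * f ∈ R → f⁻¹ * h ∈ R → f ∈ C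

namespace Subgroup.IsConvexWRT

variable {G : Type*} [Group G] {C : Subgroup G} {R : Set G}

theorem mem_of_mem_of_inv_mul_mem (hconv : C.IsConvexWRT R) {f h : G} (hf : f ∈ R)
    (hfh : f⁻¹ * h ∈ R) (hh : h ∈ C) : f ∈ C :=
  hconv 1 C.one_mem h hh f (by rwa [inv_one, one_mul]) hfh

theorem mul_mem_diff (hR : IsCone R) (hconv : C.IsConvexWRT R) {a b : G}
    (ha : a ∈ R \ (C : Set G)) (hb : b ∈ R \ (C : Set G)) : a * b ∈ R \ (C : Set G) :=
  ⟨hR.1 a ha.1 b hb.1, fun hab =>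
    ha.2 (hconv.mem_of_mem_of_inv_mul_mem ha.1 (by rw [inv_mul_cancel_left]; exact hb.1) hab)⟩

theorem mul_mem_diff_of_mem_left (hR : IsCone R) (hconv : C.IsConvexWRT R) {c q : G}
    (hc : c ∈ C) (hq : q ∈ R \ (C : Set G)) : c * q ∈ R \ (C : Set G) := by
  have hcq : c * q ∉ C := fun h => hq.2 ((C.mul_mem_cancel_left hc).1 h)
  refine ⟨?_, hcq⟩
  rcases hR.2.1 (c * q) with hpos | hneg | hone
  · exact hpos
  · rw [mul_inv_rev] at hneg
    exact absurd (hconv.mem_of_mem_of_inv_mul_mem hq.1 hneg (C.inv_mem hc)) hq.2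
  · exact absurd (hone ▸ C.one_mem) hcq

theorem mul_mem_diff_of_mem_right (hR : IsCone R) (hconv : C.IsConvexWRT R) {q c : G}
    (hq : q ∈ R \ (C : Set G)) (hc : c ∈ C) : q * c ∈ R \ (C : Set G) := by
  rcases hR.mem_diff_or_inv_mem_diff_or_mem C (q * c) with hpos | hneg | hqc
  · exact hpos
  · -- `c * (q * c)⁻¹ = q⁻¹` would then be positive.
    have := (hconv.mul_mem_diff_of_mem_left hR hc hneg).1
    rw [mul_inv_rev, mul_inv_cancel_left] at this
    exact absurd this (hR.2.2.1 q hq.1)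
  · exact absurd ((C.mul_mem_cancel_right hc).1 hqc) hq.2

end Subgroup.IsConvexWRT

theorem stmt_12_general {G : Type*} [Group G] (C : Subgroup G) (R : Set G)
    (hR : IsCone R)
    (hconv : ∀ g ∈ C, ∀ h ∈ C, ∀ f : G, g⁻¹ * f ∈ R → f⁻¹ * h ∈ R → f ∈ C) :
    (∀ a ∈ R \ (C : Set G), ∀ b ∈ R \ (C : Set G), a * b ∈ R \ (C : Set G)) ∧
    (∀ c ∈ C, ∀ q ∈ R \ (C : Set G), ∀ c' ∈ C, c * q * c' ∈ R \ (C : Set G)) ∧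
    (∀ g : G, g ∈ R \ (C : Set G) ∨ g⁻¹ ∈ R \ (C : Set G) ∨ g ∈ C) := by
  have hconv : C.IsConvexWRT R := hconv
  exact ⟨fun a ha b hb => hconv.mul_mem_diff hR ha hb,
    fun c hc q hq c' hc' =>
      hconv.mul_mem_diff_of_mem_right hR (hconv.mul_mem_diff_of_mem_left hR hc hq) hc',
    hR.mem_diff_or_inv_mem_diff_or_mem C⟩

theorem stmt_12 {G : Type*} [Group G] (C : Subgroup G) (R : Set G)
    (hR : IsCone R)
    (hP : IsConeOn C (R ∩ (C : Set G)))
    (hconv : ∀ g ∈ C, ∀ h ∈ C, ∀ f : G, g⁻¹ * f ∈ R → f⁻¹ * h ∈ R → f ∈ C) :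
    (∀ a ∈ R \ (C : Set G), ∀ b ∈ R \ (C : Set G), a * b ∈ R \ (C : Set G)) ∧
    (∀ c ∈ C, ∀ q ∈ R \ (C : Set G), ∀ c' ∈ C, c * q * c' ∈ R \ (C : Set G)) ∧
    (∀ g : G, g ∈ R \ (C : Set G) ∨ g⁻¹ ∈ R \ (C : Set G) ∨ g ∈ C) :=
  stmt_12_general C R hR hconv
end

section
/- Suppose 1 → K → G → H → 1 is a short exact sequence of groups with quotient map q : G → H, Q is a positive cone of H, and P is a positive cone of K (viewed in G) satisfying gPg⁻¹ = P for all g ∈ G. Then q⁻¹(Q) ∪ P is a positive cone of G. -/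
section ConeAPI

variable {G : Type*} [Group G] {P : Set G} {C : Subgroup G} {a b g : G}

theorem IsCone.mul_mem (hP : IsCone P) (ha : a ∈ P) (hb : b ∈ P) : a * b ∈ P :=
  hP.1 a ha b hb

theorem IsCone.mem_or_inv_mem_or_eq_one (hP : IsCone P) (g : G) : g ∈ P ∨ g⁻¹ ∈ P ∨ g = 1 :=
  hP.2.1 g

theorem IsCone.inv_notMem (hP : IsCone P) (hg : g ∈ P) : g⁻¹ ∉ P :=
  hP.2.2.1 g hg

theorem IsCone.one_notMem (hP : IsCone P) : (1 : G) ∉ P :=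
  hP.2.2.2

theorem IsConeOn.subset (hP : IsConeOn C P) : P ⊆ C :=
  hP.1

theorem IsConeOn.mul_mem (hP : IsConeOn C P) (ha : a ∈ P) (hb : b ∈ P) : a * b ∈ P :=
  hP.2.1 a ha b hb

theorem IsConeOn.mem_or_inv_mem_or_eq_one (hP : IsConeOn C P) (hg : g ∈ C) :
    g ∈ P ∨ g⁻¹ ∈ P ∨ g = 1 :=
  hP.2.2.1 g hg

theorem IsConeOn.inv_notMem (hP : IsConeOn C P) (hg : g ∈ P) : g⁻¹ ∉ P :=
  hP.2.2.2.1 g hg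

theorem IsConeOn.one_notMem (hP : IsConeOn C P) : (1 : G) ∉ P :=
  hP.2.2.2.2

end ConeAPI

section Extension

variable {G H : Type*} [Group G] [Group H] {q : G →* H} {Q : Set H} {P : Set G}

theorem IsConeOn.map_eq_one (hP : IsConeOn q.ker P) {p : G} (hp : p ∈ P) : q p = 1 :=
  hP.subset hp

theorem mul_mem_preimage_union (hQ : IsCone Q) (hP : IsConeOn q.ker P) {a b : G}
    (ha : a ∈ q ⁻¹' Q ∪ P) (hb : b ∈ q ⁻¹' Q ∪ P) : a * b ∈ q ⁻¹' Q ∪ P := by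
  rcases ha with ha | ha <;> rcases hb with hb | hb
  · exact Or.inl (by simpa using hQ.mul_mem ha hb)
  · exact Or.inl (by simpa [hP.map_eq_one hb] using ha)
  · exact Or.inl (by simpa [hP.map_eq_one ha] using hb)
  · exact Or.inr (hP.mul_mem ha hb)

theorem mem_or_inv_mem_preimage_union_or_eq_one (hQ : IsCone Q) (hP : IsConeOn q.ker P)
    (g : G) : g ∈ q ⁻¹' Q ∪ P ∨ g⁻¹ ∈ q ⁻¹' Q ∪ P ∨ g = 1 := by
  rcases hQ.mem_or_inv_mem_or_eq_one (q g) with hpos | hneg | hker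
  · exact Or.inl (Or.inl hpos)
  · exact Or.inr (Or.inl (Or.inl (by simpa using hneg)))
  · rcases hP.mem_or_inv_mem_or_eq_one hker with hpos | hneg | rfl
    · exact Or.inl (Or.inr hpos)
    · exact Or.inr (Or.inl (Or.inr hneg))
    · exact Or.inr (Or.inr rfl)

theorem inv_notMem_preimage_union (hQ : IsCone Q) (hP : IsConeOn q.ker P) {g : G}
    (hg : g ∈ q ⁻¹' Q ∪ P) : g⁻¹ ∉ q ⁻¹' Q ∪ P := by
  rintro (hg' | hg') <;> rcases hg with hg | hg
  · exact hQ.inv_notMem hg (by simpa using hg')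
  · exact hQ.one_notMem (by simpa [hP.map_eq_one hg] using hg')
  · have hker : q g = 1 := by simpa using hP.map_eq_one hg'
    exact hQ.one_notMem (hker ▸ hg)
  · exact hP.inv_notMem hg hg'

theorem one_notMem_preimage_union (hQ : IsCone Q) (hP : IsConeOn q.ker P) :
    (1 : G) ∉ q ⁻¹' Q ∪ P := by
  rintro (h | h)
  · exact hQ.one_notMem (by simpa using h)
  · exact hP.one_notMem h

end Extension

theorem stmt_15_general {G H : Type*} [Group G] [Group H]
    (q : G →* H)
    (Q : Set H) (hQ : IsCone Q)
    (P : Set G) (hP : IsConeOn q.ker P) :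
    IsCone (q ⁻¹' Q ∪ P) :=
  ⟨fun _ ha _ hb => mul_mem_preimage_union hQ hP ha hb,
    mem_or_inv_mem_preimage_union_or_eq_one hQ hP,
    fun _ hg => inv_notMem_preimage_union hQ hP hg,
    one_notMem_preimage_union hQ hP⟩

theorem stmt_15 {G H : Type*} [Group G] [Group H]
    (q : G →* H) (hq : Function.Surjective q)
    (Q : Set H) (hQ : IsCone Q)
    (P : Set G) (hP : IsConeOn q.ker P)
    (hinv : ∀ g : G, (fun p => g * p * g⁻¹) '' P = P) :
    IsCone (q ⁻¹' Q ∪ P) :=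
  stmt_15_general q Q hQ P hP
end

section
/- Suppose 1 → K → G →^q H → 1 is a short exact sequence, P is a positive cone of K = ker q satisfying gPg⁻¹ = P for all g ∈ G, and Q, R are positive cones of H. If g ∈ G and g·(q⁻¹(R) ∪ P)·g⁻¹ = q⁻¹(Q) ∪ P, then q(g)·R·q(g)⁻¹ = Q. Conversely, if h ∈ H satisfies hRh⁻¹ = Q and g ∈ G satisfies q(g) = h, then g·(q⁻¹(R) ∪ P)·g⁻¹ = q⁻¹(Q) ∪ P. -/
/-!
Conjugation by `g` maps `q⁻¹(R)` onto `q⁻¹(q(g) R q(g)⁻¹)` and fixes `P`, so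
`g (q⁻¹(R) ∪ P) g⁻¹ = q⁻¹(q(g) R q(g)⁻¹) ∪ P`. Since neither cone of `H` contains `1`,
both preimages are disjoint from `P ⊆ ker q`; hence `P` can be cancelled from an equation
`q⁻¹(A) ∪ P = q⁻¹(B) ∪ P`, and surjectivity of `q` gives `A = B`.
-/

theorem Set.eq_of_union_eq_union_of_disjoint {α : Type*} {s t u : Set α}
    (hs : Disjoint s u) (ht : Disjoint t u) (h : s ∪ u = t ∪ u) : s = t := by
  rw [← hs.sup_sdiff_cancel_right, ← ht.sup_sdiff_cancel_right]
  exact congrArg (· \ u) h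

namespace MonoidHom

variable {G H : Type*} [Group G] [Group H] (q : G →* H)

theorem image_conj_preimage (g : G) (R : Set H) :
    (fun w => g * w * g⁻¹) '' (q ⁻¹' R) = q ⁻¹' ((fun h => q g * h * (q g)⁻¹) '' R) := by
  ext y
  constructor
  · rintro ⟨w, hw, rfl⟩
    exact ⟨q w, hw, by simp only [map_mul, map_inv]⟩
  · rintro ⟨r, hr, hry⟩
    refine ⟨g⁻¹ * y * g, ?_, by group⟩
    simpa only [Set.mem_preimage, map_mul, map_inv, ← hry, mul_assoc, inv_mul_cancel_left,
      inv_mul_cancel, mul_one] using hr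

theorem disjoint_preimage_of_one_notMem {A : Set H} (hA : (1 : H) ∉ A) {P : Set G}
    (hP : P ⊆ q.ker) : Disjoint (q ⁻¹' A) P :=
  Set.disjoint_left.mpr fun _ hx hxP => hA (by rwa [← mem_ker.mp (hP hxP)])

end MonoidHom

theorem one_notMem_image_conj {H : Type*} [Group H] {R : Set H} (hR : (1 : H) ∉ R) (h : H) :
    (1 : H) ∉ (fun x => h * x * h⁻¹) '' R := by
  rintro ⟨r, hr, hr1⟩
  rw [mul_inv_eq_one, mul_eq_left] at hr1
  exact hR (hr1 ▸ hr)

theorem stmt_16 {G H : Type*} [Group G] [Group H]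
    (q : G →* H) (hq : Function.Surjective q)
    (P : Set G) (hP : IsConeOn q.ker P)
    (hinv : ∀ g : G, (fun p => g * p * g⁻¹) '' P = P)
    (Q R : Set H) (hQ : IsCone Q) (hR : IsCone R) :
    (∀ g : G,
      (fun w => g * w * g⁻¹) '' (q ⁻¹' R ∪ P) = q ⁻¹' Q ∪ P →
      (fun h => q g * h * (q g)⁻¹) '' R = Q) ∧
    (∀ h : H, (fun x => h * x * h⁻¹) '' R = Q →
      ∀ g : G, q g = h →
        (fun w => g * w * g⁻¹) '' (q ⁻¹' R ∪ P) = q ⁻¹' Q ∪ P) := by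
  have conj_union (g : G) : (fun w => g * w * g⁻¹) '' (q ⁻¹' R ∪ P) =
      q ⁻¹' ((fun h => q g * h * (q g)⁻¹) '' R) ∪ P := by
    rw [Set.image_union, q.image_conj_preimage, hinv]
  refine ⟨fun g hg => ?_, fun h hh g hgh => ?_⟩
  · rw [conj_union] at hg
    refine hq.preimage_injective (Set.eq_of_union_eq_union_of_disjoint ?_ ?_ hg)
    · exact q.disjoint_preimage_of_one_notMem (one_notMem_image_conj hR.2.2.2 _) hP.1
    · exact q.disjoint_preimage_of_one_notMem hQ.2.2.2 hP.1
  · rw [conj_union, hgh, hh]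
end

section
/- Let C be a group with a bi-invariant positive cone P, let F be a group with a left-invariant strict total order ≺, and let B = ⊕_{x∈F} C be the finitely supported functions from F to C. For A ⊆ F, define R_A = {f ∈ B : f ≠ 1 and f(x_0) ∈ P_{x_0}}, where x_0 is the ≺-minimum of the support of f and P_x = P if x ∈ A, P_x = P⁻¹ otherwise. Then for every h ∈ F, the action of h on B by (h·f)(x) = f(h⁻¹x) satisfies h·R_A = R_{hA}, where hA = {ha : a ∈ A}. -/
/-- The positive cone `R_A` on `B = ⊕_{x ∈ F} C` (finitely supported functions
`F → C`) associated to `A ⊆ F`: `f` is positive iff its value at the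
`≺`-minimum `x₀` of its support lies in `P` when `x₀ ∈ A`, and in `P⁻¹`
otherwise. -/
def coneRA {F C : Type*} [Group F] [Group C] (lt : F → F → Prop)
    (P : Set C) (A : Set F) : Set (F → C) :=
  {f | (Function.mulSupport f).Finite ∧
    ∃ x₀ : F, (∀ y : F, lt y x₀ → f y = 1) ∧ f x₀ ≠ 1 ∧
      ((x₀ ∈ A ∧ f x₀ ∈ P) ∨ (x₀ ∉ A ∧ (f x₀)⁻¹ ∈ P))}

/- Left translation by `h` moves the support of `f` to `h` times it and, since `≺` is
left-invariant, moves its `≺`-minimum `x₀` to `h x₀` while keeping the value there; so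
`f ∈ R_A` iff its translate lies in `R_{hA}`. Translating back by `h⁻¹` gives the reverse
inclusion. -/

theorem mem_coneRA_translate {F C : Type*} [Group F] [Group C] {lt : F → F → Prop}
    (hleft : ∀ a x y : F, lt x y → lt (a * x) (a * y))
    {P : Set C} {A : Set F} {f : F → C} (hf : f ∈ coneRA lt P A) (h : F) :
    (fun x => f (h⁻¹ * x)) ∈ coneRA lt P ((fun a => h * a) '' A) := by
  obtain ⟨hfin, x₀, hmin, hne, hcase⟩ := hf
  have hx₀ : h⁻¹ * (h * x₀) = x₀ := inv_mul_cancel_left h x₀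
  refine ⟨hfin.preimage (mul_right_injective h⁻¹).injOn, h * x₀,
    fun y hy => hmin _ (hx₀ ▸ hleft h⁻¹ y (h * x₀) hy), by simpa only [hx₀] using hne, ?_⟩
  simp only [hx₀, Set.mem_image, mul_right_inj, exists_eq_right]
  exact hcase

theorem stmt_18_general {F C : Type*} [Group F] [Group C]
    (lt : F → F → Prop)
    (hleft : ∀ a x y : F, lt x y → lt (a * x) (a * y))
    (P : Set C)
    (A : Set F) (h : F) :
    (fun f : F → C => fun x => f (h⁻¹ * x)) '' coneRA lt P A =
      coneRA lt P ((fun a => h * a) '' A) := by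
  refine subset_antisymm (Set.image_subset_iff.2 fun f hf => mem_coneRA_translate hleft hf h)
    fun g hg => ⟨fun x => g (h * x), ?_, by simp only [mul_inv_cancel_left]⟩
  have hg' := mem_coneRA_translate hleft hg h⁻¹
  simp only [Set.image_image, inv_mul_cancel_left, Set.image_id', inv_inv] at hg'
  exact hg'

theorem stmt_18 {F C : Type*} [Group F] [Group C]
    (lt : F → F → Prop)
    (hirr : ∀ x : F, ¬ lt x x)
    (htrans : ∀ x y z : F, lt x y → lt y z → lt x z)
    (htotal : ∀ x y : F, x ≠ y → lt x y ∨ lt y x)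
    (hleft : ∀ a x y : F, lt x y → lt (a * x) (a * y))
    (P : Set C)
    (hmul : ∀ a ∈ P, ∀ b ∈ P, a * b ∈ P)
    (hcover : ∀ c : C, c ∈ P ∨ c⁻¹ ∈ P ∨ c = 1)
    (hdisj : ∀ c ∈ P, c⁻¹ ∉ P)
    (hone : (1 : C) ∉ P)
    (hbi : ∀ c : C, ∀ p ∈ P, c * p * c⁻¹ ∈ P)
    (A : Set F) (h : F) :
    (fun f : F → C => fun x => f (h⁻¹ * x)) '' coneRA lt P A =
      coneRA lt P ((fun a => h * a) '' A) :=
  stmt_18_general lt hleft P A h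
end
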